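/- Let D be a division ring of characteristic 3 with derivation δ, and let c, d ∈ D. The polynomial f(t) = t³ − ct − d ∈ D[t;δ] is irreducible in D[t;δ] if and only if for all z ∈ D both V₃(z) − cz ≠ d and V₃(z) − zc + δ(c) ≠ d hold. -/

import Mathlib

open Finsupp

section Defs

variable {D R : Type*}

/-- `δ` is a derivation on the (possibly noncommutative) ring `D`. -/
def IsDeriv [Ring D] (δ : D → D) : Prop :=
  (∀ a b, δ (a + b) = δ a + δ b) ∧ ∀ a b, δ (a * b) = a * δ b + δ a * b

/-- `(R, i, t, coeff)` realizes the differential polynomial ring `D[t;δ]`: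
`t * a = a * t + δ a` for `a ∈ D`, and every element of `R` is uniquely of
the form `∑ aₙ tⁿ`, the `aₙ` being recorded by the additive equivalence `coeff`. -/
def IsDiffPolyRing [Ring D] [Ring R] (δ : D → D) (i : D →+* R) (t : R)
    (coeff : R ≃+ (ℕ →₀ D)) : Prop :=
  (∀ a : D, t * i a = i a * t + i (δ a)) ∧
    ∀ (n : ℕ) (a : D), coeff.symm (Finsupp.single n a) = i a * t ^ n

/-- `r` has degree `< m`. -/
def DegLt [Ring D] [Ring R] (coeff : R ≃+ (ℕ →₀ D)) (m : ℕ) (r : R) : Prop :=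
  ∀ n, m ≤ n → coeff r n = 0

/-- `f` is monic of degree `m`. -/
def MonicDeg [Ring D] [Ring R] (coeff : R ≃+ (ℕ →₀ D)) (m : ℕ) (f : R) : Prop :=
  coeff f m = 1 ∧ ∀ n, m < n → coeff f n = 0

/-- The carrier of the Petit algebra `S_f`: all polynomials of degree `< m`. -/
def SfSet [Ring D] [Ring R] (coeff : R ≃+ (ℕ →₀ D)) (m : ℕ) : Set R :=
  {r | DegLt coeff m r}

/-- `mul` is the Petit multiplication: `mul x y = x·y mod_r f`, i.e. `mul x y`
has degree `< m` and differs from `x·y` by a left multiple of `f`. -/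
def IsPetitMul [Ring D] [Ring R] (coeff : R ≃+ (ℕ →₀ D)) (f : R) (m : ℕ)
    (mul : R → R → R) : Prop :=
  ∀ x y : R, DegLt coeff m (mul x y) ∧ ∃ q : R, x * y = q * f + mul x y

/-- `f` is right semi-invariant: `f·a ∈ D·f` for all `a ∈ D`. -/
def RightSemiInvariant [Ring D] [Ring R] (i : D →+* R) (f : R) : Prop :=
  ∀ a : D, ∃ b : D, f * i a = i b * f

/-- `f` is two-sided (invariant): the left ideal `Rf` is a two-sided ideal. -/
def TwoSidedElem [Ring R] (f : R) : Prop :=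
  ∀ r : R, ∃ q : R, f * r = q * f

/-- `f` (of degree `m`) is irreducible: it has no factorization into factors
of degree `< m`. -/
def IrredDeg [Ring D] [Ring R] (coeff : R ≃+ (ℕ →₀ D)) (m : ℕ) (f : R) : Prop :=
  ¬∃ g h : R, f = g * h ∧ DegLt coeff m g ∧ DegLt coeff m h

/-- `f` (of degree `m`) is irreducible as a polynomial with coefficients in
the subfield `Fset` of `D`. -/
def IrredOver [Ring D] [Ring R] (coeff : R ≃+ (ℕ →₀ D)) (Fset : Set D) (m : ℕ)
    (f : R) : Prop :=
  ¬∃ g h : R, f = g * h ∧ DegLt coeff m g ∧ DegLt coeff m h ∧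
    (∀ n, coeff g n ∈ Fset) ∧ ∀ n, coeff h n ∈ Fset

/-- Left nucleus of the algebra `(S, mul)`. -/
def LeftNuc [Ring R] (S : Set R) (mul : R → R → R) : Set R :=
  {x ∈ S | ∀ y ∈ S, ∀ z ∈ S, mul (mul x y) z = mul x (mul y z)}

/-- Middle nucleus of the algebra `(S, mul)`. -/
def MidNuc [Ring R] (S : Set R) (mul : R → R → R) : Set R :=
  {x ∈ S | ∀ y ∈ S, ∀ z ∈ S, mul (mul y x) z = mul y (mul x z)}

/-- Right nucleus of the algebra `(S, mul)`. -/
def RightNuc [Ring R] (S : Set R) (mul : R → R → R) : Set R :=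
  {x ∈ S | ∀ y ∈ S, ∀ z ∈ S, mul (mul y z) x = mul y (mul z x)}

/-- `(S, mul)` is a division algebra: all nonzero left and right
multiplications are bijective. -/
def IsDivAlg [Ring R] (S : Set R) (mul : R → R → R) : Prop :=
  ∀ x ∈ S, x ≠ 0 → Set.BijOn (mul x) S S ∧ Set.BijOn (fun y => mul y x) S S

/-- `(S, mul)` is associative. -/
def IsAssocOn [Ring R] (S : Set R) (mul : R → R → R) : Prop :=
  ∀ x ∈ S, ∀ y ∈ S, ∀ z ∈ S, mul (mul x y) z = mul x (mul y z)

/-- The constants of `δ`. -/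
def ConstSet [Ring D] (δ : D → D) : Set D := {a | δ a = 0}

/-- The center of `D`. -/
def CenterSet (D : Type*) [Ring D] : Set D := {a | ∀ b, a * b = b * a}

/-- `F₀ = Const(δ) ∩ C(D)`. -/
def F0Set [Ring D] (δ : D → D) : Set D := ConstSet δ ∩ CenterSet D

/-- The elements of the Petit algebra all of whose coefficients lie in `Fset`,
e.g. `Fset ⊕ Fset·t ⊕ ⋯ ⊕ Fset·t^{m-1}`. -/
def SubCoeffSet [Ring D] [Ring R] (coeff : R ≃+ (ℕ →₀ D)) (m : ℕ)
    (Fset : Set D) : Set R :=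
  {r | DegLt coeff m r ∧ ∀ n, coeff r n ∈ Fset}

/-- `S ⊆ R` has dimension `k` over the subfield `Fset ⊆ D` (acting through `i`):
there is an `Fset`-basis of size `k`. -/
def HasDim [Ring D] [Ring R] (Fset : Set D) (i : D →+* R) (S : Set R) (k : ℕ) : Prop :=
  ∃ b : Fin k → R, (∀ j, b j ∈ S) ∧
    ∀ x ∈ S, ∃! c : Fin k → D, (∀ j, c j ∈ Fset) ∧ x = ∑ j, i (c j) * b j

/-- `S ⊆ D` has dimension `k` over the subfield `Fset ⊆ D`. -/
def HasDimIn [Ring D] (Fset : Set D) (S : Set D) (k : ℕ) : Prop :=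
  ∃ b : Fin k → D, (∀ j, b j ∈ S) ∧
    ∀ x ∈ S, ∃! c : Fin k → D, (∀ j, c j ∈ Fset) ∧ x = ∑ j, c j * b j

/-- Substitution of `x` for `t` in `r = ∑ aₙ tⁿ`. -/
noncomputable def substT [Ring D] [Ring R] (coeff : R ≃+ (ℕ →₀ D)) (i : D →+* R) (r x : R) : R :=
  (coeff r).sum fun n c => i c * x ^ n

/-- `V_f(b)`: the constant `f(t) − f(t−b)`. -/
noncomputable def Vf [Ring D] [Ring R] (coeff : R ≃+ (ℕ →₀ D)) (i : D →+* R) (t f : R) (b : D) : D :=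
  coeff (f - substT coeff i f (t - i b)) 0

/-- `V_p(b)`: the constant with `(t−b)^p = t^p − V_p(b)`. -/
noncomputable def Vp [Ring D] [Ring R] (coeff : R ≃+ (ℕ →₀ D)) (i : D →+* R) (t : R) (p : ℕ)
    (b : D) : D :=
  coeff (t ^ p - (t - i b) ^ p) 0

/-- For commutative coefficients, `V_p(b) = b^p + δ^{p−1}(b)`. -/
def VpFun [Ring D] (δ : D → D) (p : ℕ) : D → D := fun b => b ^ p + δ^[p - 1] b

/-- `V(a) = V_{p^e}(a) + c₁ V_{p^{e−1}}(a) + ⋯ + c_e a`, computed with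
`V_p(b) = b^p + δ^{p−1}(b)` (commutative case). -/
def Vg [Ring D] (δ : D → D) (p e : ℕ) (c : Fin e → D) : D → D :=
  fun a => (VpFun δ p)^[e] a + ∑ j : Fin e, c j * (VpFun δ p)^[e - 1 - (j : ℕ)] a

/-- `V(a) = V_{p^e}(a) + c₁ V_{p^{e−1}}(a) + ⋯ + c_e a`, with `V_p` defined by
the identity `(t−b)^p = t^p − V_p(b)` in `D[t;δ]`. -/
noncomputable def VgR [Ring D] [Ring R] (coeff : R ≃+ (ℕ →₀ D)) (i : D →+* R) (t : R) (p e : ℕ)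
    (c : Fin e → D) : D → D :=
  fun a => (Vp coeff i t p)^[e] a + ∑ j : Fin e, c j * (Vp coeff i t p)^[e - 1 - (j : ℕ)] a

/-- The map `G_{id,−a}` sending `∑ bₙ tⁿ` to `∑ bₙ (t−a)ⁿ`. -/
noncomputable def Gmap [Ring D] [Ring R] (coeff : R ≃+ (ℕ →₀ D)) (i : D →+* R) (t : R) (a : D) :
    R → R :=
  fun r => substT coeff i r (t - i a)

/-- `H` is an isomorphism of `Fset`-algebras from `(S, mul)` onto `(S', mul')`. -/
def IsAlgIso [Ring D] [Ring R] (Fset : Set D) (i : D →+* R) (S S' : Set R)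
    (mul mul' : R → R → R) (H : R → R) : Prop :=
  Set.BijOn H S S' ∧ (∀ x ∈ S, ∀ y ∈ S, H (x + y) = H x + H y) ∧
    (∀ x ∈ S, ∀ y ∈ S, H (mul x y) = mul' (H x) (H y)) ∧ H 1 = 1 ∧
    ∀ a ∈ Fset, ∀ x ∈ S, H (i a * x) = i a * H x

/-- `H` is an `Fset`-algebra automorphism of the Petit algebra `(S, mul)`. -/
def IsAut [Ring D] [Ring R] (Fset : Set D) (i : D →+* R) (S : Set R)
    (mul : R → R → R) (H : R → R) : Prop :=
  IsAlgIso Fset i S S mul mul H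

/-- The operator `δ^{p^e} + c₁ δ^{p^{e−1}} + ⋯ + c_e δ` vanishes on `Cset`,
i.e. the `p`-polynomial `t^{p^e} + c₁ t^{p^{e−1}} + ⋯ + c_e t` annihilates `δ|_{Cset}`. -/
def PPolyAnnOn [Ring D] (δ : D → D) (Cset : Set D) (p e : ℕ) (c : Fin e → D) : Prop :=
  ∀ a ∈ Cset, δ^[p ^ e] a + ∑ j : Fin e, c j * δ^[p ^ (e - 1 - (j : ℕ))] a = 0

/-- `t^{p^e} + c₁ t^{p^{e−1}} + ⋯ + c_e t` (coefficients in `Fset`) is the minimum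
`p`-polynomial of `δ` restricted to `Cset`. -/
def IsMinPPoly [Ring D] (δ : D → D) (Cset Fset : Set D) (p e : ℕ)
    (c : Fin e → D) : Prop :=
  (∀ j, c j ∈ Fset) ∧ PPolyAnnOn δ Cset p e c ∧
    ∀ e' : ℕ, e' < e → ∀ c' : Fin e' → D, (∀ j, c' j ∈ Fset) →
      ¬PPolyAnnOn δ Cset p e' c'

/-- The natural map from `D[X]` to `R`, `∑ aₙ Xⁿ ↦ ∑ aₙ tⁿ`. -/
noncomputable def polyToR [Ring D] [Ring R] (i : D →+* R) (t : R) (q : Polynomial D) : R :=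
  q.sum fun n a => i a * t ^ n

/-- The element `f ∈ R` rewritten as an ordinary polynomial in `D[X]`. -/
noncomputable def coeffPoly [Ring D] [Ring R] (coeff : R ≃+ (ℕ →₀ D)) (f : R) : Polynomial D :=
  (coeff f).sum fun n a => Polynomial.C a * Polynomial.X ^ n

/-- The set `T = Fset ⊕ Fset·t ⊕ ⋯ ⊕ Fset·t^{m−1} ⊆ S_f` is isomorphic, as a
ring, to the quotient `Fset[X]/(f)`: the natural map `θ : ∑ aₙ Xⁿ ↦ ∑ aₙ tⁿ`,
from polynomials over `Fset` of degree `< m` with multiplication given by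
reduction mod `f`, is a bijection onto `T` respecting all the operations. -/
def IsPolyQuotIso [Ring D] [Ring R] (Fset : Set D) (i : D →+* R)
    (coeff : R ≃+ (ℕ →₀ D)) (t f : R) (m : ℕ) (mul : R → R → R) (T : Set R) : Prop :=
  Set.BijOn (polyToR i t)
    {q : Polynomial D | (∀ n, q.coeff n ∈ Fset) ∧ q.degree < (m : WithBot ℕ)} T ∧
  (∀ q q' : Polynomial D, polyToR i t (q + q') = polyToR i t q + polyToR i t q') ∧
  polyToR i t 1 = 1 ∧
  ∀ q ∈ {q : Polynomial D | (∀ n, q.coeff n ∈ Fset) ∧ q.degree < (m : WithBot ℕ)},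
    ∀ q' ∈ {q : Polynomial D | (∀ n, q.coeff n ∈ Fset) ∧ q.degree < (m : WithBot ℕ)},
      ∃ s r : Polynomial D, q * q' = s * coeffPoly coeff f + r ∧
        r.degree < (m : WithBot ℕ) ∧
        polyToR i t r = mul (polyToR i t q) (polyToR i t q')

end Defs

/-!
Since leading coefficients multiply, a factorization of the monic cubic `f = t³ − ct − d` into
factors of degree `< 3` has a linear factor on the left or on the right, which can be made monic.
In characteristic `3` one has `(t − z)³ = t³ − V₃(z)`, hence
`((t − z)² − c)(t − z) = t³ − ct − (V₃(z) − cz)` and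
`(t − z)((t − z)² − c) = t³ − ct − (V₃(z) − zc + δ(c))`, the `δ(c)` coming from `tc = ct + δ(c)`.
Division by the monic `t − z` leaves a constant remainder that is unique, so `t − z` is a right
(left) factor of `f` exactly when the first (second) constant equals `d`.
-/

theorem IsDeriv.map_zero {D : Type*} [Ring D] {δ : D → D} (hδ : IsDeriv δ) : δ 0 = 0 := by
  simpa using hδ.1 0 0

section DegLt

variable {D R : Type*} [Ring D] [Ring R] {coeff : R ≃+ (ℕ →₀ D)}

namespace DegLt

theorem of_succ {m : ℕ} {r : R} (hr : DegLt coeff (m + 1) r) (hm : coeff r m = 0) :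
    DegLt coeff m r := fun n hn => by
  rcases hn.eq_or_lt with rfl | hn
  exacts [hm, hr n hn]

theorem mono {m m' : ℕ} {r : R} (hr : DegLt coeff m r) (hm : m ≤ m') : DegLt coeff m' r :=
  fun n hn => hr n (hm.trans hn)

theorem eq_zero {r : R} (hr : DegLt coeff 0 r) : r = 0 :=
  coeff.injective <| by ext n; simpa using hr n n.zero_le

end DegLt

theorem exists_degLt_succ_coeff_ne_zero {r : R} (hr : r ≠ 0) :
    ∃ k, DegLt coeff (k + 1) r ∧ coeff r k ≠ 0 := by
  have hsupp : (coeff r).support.Nonempty :=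
    Finsupp.support_nonempty_iff.2 fun h => hr (coeff.injective (by rw [h, map_zero]))
  refine ⟨(coeff r).support.max' hsupp, fun n hn => ?_,
    Finsupp.mem_support_iff.1 (Finset.max'_mem _ _)⟩
  by_contra hne
  have := (coeff r).support.le_max' n (Finsupp.mem_support_iff.2 hne)
  omega

end DegLt

namespace IsDiffPolyRing

section Ring

variable {D R : Type*} [Ring D] [Ring R] {δ : D → D} {i : D →+* R} {t : R}
  {coeff : R ≃+ (ℕ →₀ D)}

theorem coeff_i_mul_t_pow (hR : IsDiffPolyRing δ i t coeff) (n : ℕ) (a : D) :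
    coeff (i a * t ^ n) = Finsupp.single n a := by
  rw [← hR.2 n a, AddEquiv.apply_symm_apply]

theorem coeff_i (hR : IsDiffPolyRing δ i t coeff) (a : D) : coeff (i a) = Finsupp.single 0 a := by
  simpa using hR.coeff_i_mul_t_pow 0 a

theorem coeff_t_pow (hR : IsDiffPolyRing δ i t coeff) (n : ℕ) :
    coeff (t ^ n) = Finsupp.single n 1 := by
  simpa using hR.coeff_i_mul_t_pow n 1

theorem i_injective (hR : IsDiffPolyRing δ i t coeff) : Function.Injective i :=
  (injective_iff_map_eq_zero i).2 fun a ha => by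
    simpa [ha] using (congrArg (· 0) (hR.coeff_i a)).symm

theorem induction_on (hR : IsDiffPolyRing δ i t coeff) {P : R → Prop} (r : R) (zero : P 0)
    (add : ∀ x y, P x → P y → P (x + y)) (monomial : ∀ n a, P (i a * t ^ n)) : P r := by
  rw [← coeff.symm_apply_apply r]
  induction coeff r using Finsupp.induction_linear with
  | zero => simpa using zero
  | add f g hf hg => simpa using add _ _ hf hg
  | single n a => simpa [hR.2] using monomial n a

theorem coeff_i_mul (hR : IsDiffPolyRing δ i t coeff) (a : D) (r : R) (n : ℕ) :
    coeff (i a * r) n = a * coeff r n := by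
  induction r using hR.induction_on with
  | zero => simp
  | add x y hx hy => simp [mul_add, hx, hy]
  | monomial k b =>
    rw [← mul_assoc, ← map_mul, hR.coeff_i_mul_t_pow, hR.coeff_i_mul_t_pow]
    simp only [Finsupp.single_apply]
    split_ifs <;> simp

theorem coeff_t_mul_succ (hR : IsDiffPolyRing δ i t coeff) (hδ : IsDeriv δ) (r : R) (n : ℕ) :
    coeff (t * r) (n + 1) = coeff r n + δ (coeff r (n + 1)) := by
  induction r using hR.induction_on with
  | zero => simp [hδ.map_zero]
  | add x y hx hy =>
    simp only [mul_add, map_add, Finsupp.add_apply, hx, hy, hδ.1]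
    abel
  | monomial k a =>
    have h : t * (i a * t ^ k) = i a * t ^ (k + 1) + i (δ a) * t ^ k := by
      rw [← mul_assoc, hR.1, add_mul, mul_assoc, ← pow_succ']
    rw [h, coeff.map_add, Finsupp.add_apply]
    simp only [hR.coeff_i_mul_t_pow, Finsupp.single_apply, add_left_inj]
    by_cases hkn : k = n
    · subst hkn; simp [hδ.map_zero]
    · by_cases hkn' : k = n + 1
      · subst hkn'; simp
      · simp [hkn, hkn', hδ.map_zero]

theorem degLt_one_i (hR : IsDiffPolyRing δ i t coeff) (a : D) : DegLt coeff 1 (i a) :=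
  fun n hn => by rw [hR.coeff_i, Finsupp.single_eq_of_ne (by omega)]

theorem eq_sum_of_degLt (hR : IsDiffPolyRing δ i t coeff) {m : ℕ} {r : R}
    (hr : DegLt coeff m r) :
    r = ∑ n ∈ Finset.range m, i (coeff r n) * t ^ n := by
  apply coeff.injective
  ext k
  simp only [map_sum, Finsupp.finsetSum_apply, hR.coeff_i_mul_t_pow, Finsupp.single_apply,
    Finset.sum_ite_eq', Finset.mem_range]
  split_ifs with hk
  · rfl
  · exact hr k (not_lt.1 hk)

theorem degLt_t_pow_mul (hR : IsDiffPolyRing δ i t coeff) (hδ : IsDeriv δ) {b : ℕ} {r : R}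
    (hr : DegLt coeff (b + 1) r) (k : ℕ) :
    DegLt coeff (b + k + 1) (t ^ k * r) ∧ coeff (t ^ k * r) (b + k) = coeff r b := by
  induction k with
  | zero => simpa using hr
  | succ k ih =>
    rw [pow_succ', mul_assoc]
    refine ⟨fun n hn => ?_, ?_⟩
    · obtain ⟨n, rfl⟩ : ∃ n', n = n' + 1 := ⟨n - 1, by omega⟩
      rw [hR.coeff_t_mul_succ hδ, ih.1 n (by omega), ih.1 (n + 1) (by omega), hδ.map_zero,
        add_zero]
    · rw [← add_assoc, hR.coeff_t_mul_succ hδ, ih.2, ih.1 _ le_rfl, hδ.map_zero, add_zero]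

theorem coeff_mul_add_of_degLt (hR : IsDiffPolyRing δ i t coeff) (hδ : IsDeriv δ) {a b : ℕ}
    {g h : R} (hg : DegLt coeff (a + 1) g) (hh : DegLt coeff (b + 1) h) :
    coeff (g * h) (a + b) = coeff g a * coeff h b := by
  conv_lhs => rw [hR.eq_sum_of_degLt hg]
  rw [Finset.sum_mul, map_sum, Finsupp.finsetSum_apply,
    Finset.sum_range_succ, Finset.sum_eq_zero, zero_add]
  · rw [mul_assoc, hR.coeff_i_mul, add_comm a b, (hR.degLt_t_pow_mul hδ hh a).2]
  · intro n hn
    rw [mul_assoc, hR.coeff_i_mul, (hR.degLt_t_pow_mul hδ hh n).1 _ (by simp at hn; omega),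
      mul_zero]

theorem eq_of_degLt_two (hR : IsDiffPolyRing δ i t coeff) {r : R} (hr : DegLt coeff 2 r) :
    r = i (coeff r 1) * t + i (coeff r 0) := by
  conv_lhs => rw [hR.eq_sum_of_degLt hr]
  simp [Finset.sum_range_succ, add_comm]

theorem degLt_t_sub_i (hR : IsDiffPolyRing δ i t coeff) (z : D) : DegLt coeff 2 (t - i z) := by
  intro n hn
  rw [coeff.map_sub, Finsupp.sub_apply, ← pow_one t, hR.coeff_t_pow, hR.coeff_i,
    Finsupp.single_eq_of_ne (by omega), Finsupp.single_eq_of_ne (by omega), sub_zero]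

theorem coeff_t_sub_i_one (hR : IsDiffPolyRing δ i t coeff) (z : D) : coeff (t - i z) 1 = 1 := by
  rw [coeff.map_sub, Finsupp.sub_apply, ← pow_one t, hR.coeff_t_pow, hR.coeff_i]
  simp

theorem monicDeg_three (hR : IsDiffPolyRing δ i t coeff) (c d : D) :
    MonicDeg coeff 3 (t ^ 3 - i c * t - i d) := by
  simp only [MonicDeg, coeff.map_sub, Finsupp.sub_apply, hR.coeff_t_pow, hR.coeff_i]
  rw [← pow_one t, hR.coeff_i_mul_t_pow]
  refine ⟨by simp, fun n hn => ?_⟩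
  simp [Finsupp.single_eq_of_ne (show n ≠ 3 by omega),
    Finsupp.single_eq_of_ne (show n ≠ 1 by omega), Finsupp.single_eq_of_ne (show n ≠ 0 by omega)]

variable [NoZeroDivisors D]

theorem degLt_of_degLt_mul_right (hR : IsDiffPolyRing δ i t coeff) (hδ : IsDeriv δ) {l x : R}
    {m : ℕ} (hl : DegLt coeff 2 l) (hl1 : coeff l 1 ≠ 0) (h : DegLt coeff (m + 1) (x * l)) :
    DegLt coeff m x := by
  rcases eq_or_ne x 0 with rfl | hx
  · simp [DegLt]
  obtain ⟨k, hk, hxk⟩ := exists_degLt_succ_coeff_ne_zero (coeff := coeff) hx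
  have htop := hR.coeff_mul_add_of_degLt hδ hk hl
  have hkm : k < m := by
    by_contra hkm
    exact mul_ne_zero hxk hl1 (htop ▸ h _ (by omega))
  exact hk.mono hkm

theorem degLt_of_degLt_mul_left (hR : IsDiffPolyRing δ i t coeff) (hδ : IsDeriv δ) {l x : R}
    {m : ℕ} (hl : DegLt coeff 2 l) (hl1 : coeff l 1 ≠ 0) (h : DegLt coeff (m + 1) (l * x)) :
    DegLt coeff m x := by
  rcases eq_or_ne x 0 with rfl | hx
  · simp [DegLt]
  obtain ⟨k, hk, hxk⟩ := exists_degLt_succ_coeff_ne_zero (coeff := coeff) hx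
  have htop := hR.coeff_mul_add_of_degLt hδ hl hk
  have hkm : k < m := by
    by_contra hkm
    exact mul_ne_zero hl1 hxk (htop ▸ h _ (by omega))
  exact hk.mono hkm

end Ring

section DivisionRing

variable {D R : Type*} [DivisionRing D] [Ring R] {δ : D → D} {i : D →+* R} {t : R}
  {coeff : R ≃+ (ℕ →₀ D)}

theorem exists_eq_i_mul_t_sub (hR : IsDiffPolyRing δ i t coeff) {r : R} (hr : DegLt coeff 2 r)
    (hr1 : coeff r 1 ≠ 0) : ∃ z, r = i (coeff r 1) * (t - i z) := by
  refine ⟨-((coeff r 1)⁻¹ * coeff r 0), ?_⟩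
  rw [mul_sub, ← map_mul, mul_neg, ← mul_assoc, mul_inv_cancel₀ hr1, one_mul, map_neg,
    sub_neg_eq_add]
  exact hR.eq_of_degLt_two hr

theorem exists_eq_t_sub_mul_i (hR : IsDiffPolyRing δ i t coeff) {r : R} (hr : DegLt coeff 2 r)
    (hr1 : coeff r 1 ≠ 0) : ∃ z, r = (t - i z) * i (coeff r 1) := by
  refine ⟨(δ (coeff r 1) - coeff r 0) * (coeff r 1)⁻¹, ?_⟩
  rw [sub_mul, hR.1, ← map_mul, mul_assoc, inv_mul_cancel₀ hr1, mul_one, add_sub_assoc,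
    ← map_sub, sub_sub_cancel]
  exact hR.eq_of_degLt_two hr

theorem irredDeg_three_iff (hR : IsDiffPolyRing δ i t coeff) (hδ : IsDeriv δ) {f : R}
    (hf : MonicDeg coeff 3 f) :
    IrredDeg coeff 3 f ↔
      ∀ z, (¬∃ x, f = x * (t - i z)) ∧ ¬∃ x, f = (t - i z) * x := by
  have hf4 : DegLt coeff (3 + 1) f := hf.2
  constructor
  · refine fun hirr z => ⟨fun ⟨x, hx⟩ => hirr ⟨x, t - i z, hx, ?_, ?_⟩,
      fun ⟨x, hx⟩ => hirr ⟨t - i z, x, hx, ?_, ?_⟩⟩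
    · exact hR.degLt_of_degLt_mul_right hδ (hR.degLt_t_sub_i z)
        (hR.coeff_t_sub_i_one z ▸ one_ne_zero) (hx ▸ hf4)
    · exact (hR.degLt_t_sub_i z).mono (by norm_num)
    · exact (hR.degLt_t_sub_i z).mono (by norm_num)
    · exact hR.degLt_of_degLt_mul_left hδ (hR.degLt_t_sub_i z)
        (hR.coeff_t_sub_i_one z ▸ one_ne_zero) (hx ▸ hf4)
  · rintro hlin ⟨g, h, rfl, hg, hh⟩
    have htop : ∀ a b, DegLt coeff (a + 1) g → DegLt coeff (b + 1) h →
        coeff g a * coeff h b = coeff (g * h) (a + b) :=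
      fun a b hg hh => (hR.coeff_mul_add_of_degLt hδ hg hh).symm
    rcases mul_eq_zero.1 ((htop 2 2 hg hh).trans (hf.2 4 (by norm_num))) with hg2 | hh2
    · have hg' := hg.of_succ hg2
      have hg1 := left_ne_zero_of_mul_eq_one ((htop 1 2 hg' hh).trans hf.1)
      obtain ⟨z, hz⟩ := hR.exists_eq_t_sub_mul_i hg' hg1
      exact (hlin z).2 ⟨i (coeff g 1) * h, by rw [← mul_assoc, ← hz]⟩
    · have hh' := hh.of_succ hh2
      have hh1 := right_ne_zero_of_mul_eq_one ((htop 2 1 hg hh').trans hf.1)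
      obtain ⟨z, hz⟩ := hR.exists_eq_i_mul_t_sub hh' hh1
      exact (hlin z).1 ⟨g * i (coeff h 1), by rw [mul_assoc, ← hz]⟩

end DivisionRing

section CharThree

variable {D R : Type*} [DivisionRing D] [Ring R] [CharP D 3] {δ : D → D} {i : D →+* R} {t : R}
  {coeff : R ≃+ (ℕ →₀ D)}

theorem sub_pow_three_eq (hR : IsDiffPolyRing δ i t coeff) (z : D) :
    (t - i z) ^ 3 = t ^ 3 - i (z ^ 3 + δ (δ z) + (z * δ z - δ z * z)) := by
  have h3 : (3 : R) = 0 := by rw [← map_ofNat i 3, CharP.ofNat_eq_zero, map_zero]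
  set a := i z
  set a₁ := i (δ z)
  set a₂ := i (δ (δ z))
  -- the difference is a combination of the relations `t a = a t + δ a` and a multiple of `3`
  have key : (t - a) ^ 3 - (t ^ 3 - (a ^ 3 + a₂ + (a * a₁ - a₁ * a)))
      = 3 * (a ^ 2 * t + a * a₁ - a * t ^ 2 - a₁ * t)
        - 2 * (t * a - (a * t + a₁)) * t - t * (t * a - (a * t + a₁))
        - (t * a₁ - (a₁ * t + a₂))
        + 2 * a * (t * a - (a * t + a₁)) + (t * a - (a * t + a₁)) * a := by
    noncomm_ring
  rw [sub_eq_zero.2 (hR.1 z), sub_eq_zero.2 (hR.1 (δ z)), h3] at key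
  simpa [sub_eq_zero, a, a₁, a₂] using key

theorem vp_three_eq (hR : IsDiffPolyRing δ i t coeff) (z : D) :
    Vp coeff i t 3 z = z ^ 3 + δ (δ z) + (z * δ z - δ z * z) := by
  rw [Vp, hR.sub_pow_three_eq, sub_sub_cancel, hR.coeff_i, Finsupp.single_eq_same]

theorem sub_pow_three (hR : IsDiffPolyRing δ i t coeff) (z : D) :
    (t - i z) ^ 3 = t ^ 3 - i (Vp coeff i t 3 z) := by
  rw [hR.vp_three_eq, hR.sub_pow_three_eq]

theorem exists_eq_mul_t_sub_iff (hR : IsDiffPolyRing δ i t coeff) (hδ : IsDeriv δ) (c d z : D) :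
    (∃ x, t ^ 3 - i c * t - i d = x * (t - i z)) ↔ Vp coeff i t 3 z - c * z = d := by
  have hq : ((t - i z) ^ 2 - i c) * (t - i z)
      = t ^ 3 - i c * t - i (Vp coeff i t 3 z - c * z) := by
    rw [sub_mul, ← pow_succ, hR.sub_pow_three, map_sub, map_mul]
    noncomm_ring
  refine ⟨fun ⟨x, hx⟩ => ?_, fun h => ⟨_, by rw [hq, h]⟩⟩
  have hrem : (x - ((t - i z) ^ 2 - i c)) * (t - i z) = i (Vp coeff i t 3 z - c * z - d) := by
    rw [sub_mul, ← hx, hq]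
    simp only [map_sub]
    abel
  have hx0 : x - ((t - i z) ^ 2 - i c) = 0 := DegLt.eq_zero <|
    hR.degLt_of_degLt_mul_right hδ (hR.degLt_t_sub_i z) (hR.coeff_t_sub_i_one z ▸ one_ne_zero)
      (hrem ▸ hR.degLt_one_i _)
  rwa [hx0, zero_mul, eq_comm, map_eq_zero_iff _ hR.i_injective, sub_eq_zero] at hrem

theorem exists_eq_t_sub_mul_iff (hR : IsDiffPolyRing δ i t coeff) (hδ : IsDeriv δ) (c d z : D) :
    (∃ x, t ^ 3 - i c * t - i d = (t - i z) * x) ↔ Vp coeff i t 3 z - z * c + δ c = d := by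
  have hq : (t - i z) * ((t - i z) ^ 2 - i c)
      = t ^ 3 - i c * t - i (Vp coeff i t 3 z - z * c + δ c) := by
    rw [mul_sub, ← pow_succ', hR.sub_pow_three, sub_mul, hR.1 c, map_add, map_sub, map_mul]
    noncomm_ring
  refine ⟨fun ⟨x, hx⟩ => ?_, fun h => ⟨_, by rw [hq, h]⟩⟩
  have hrem : (t - i z) * (x - ((t - i z) ^ 2 - i c))
      = i (Vp coeff i t 3 z - z * c + δ c - d) := by
    rw [mul_sub, ← hx, hq]
    simp only [map_sub, map_add]
    abel
  have hx0 : x - ((t - i z) ^ 2 - i c) = 0 := DegLt.eq_zero <|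
    hR.degLt_of_degLt_mul_left hδ (hR.degLt_t_sub_i z) (hR.coeff_t_sub_i_one z ▸ one_ne_zero)
      (hrem ▸ hR.degLt_one_i _)
  rwa [hx0, mul_zero, eq_comm, map_eq_zero_iff _ hR.i_injective, sub_eq_zero] at hrem

end CharThree

end IsDiffPolyRing

/-- in characteristic 3, `f(t) = t³ − ct − d ∈ D[t;δ]` is
irreducible iff `V₃(z) − cz ≠ d` and `V₃(z) − zc + δ(c) ≠ d` for all `z ∈ D`. -/
theorem stmt_3 {D R : Type*} [DivisionRing D] [Ring R] [CharP D 3]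
    (δ : D → D) (hδ : IsDeriv δ)
    (i : D →+* R) (t : R) (coeff : R ≃+ (ℕ →₀ D))
    (hR : IsDiffPolyRing δ i t coeff)
    (c d : D) (f : R) (hfdef : f = t ^ 3 - i c * t - i d) :
    IrredDeg coeff 3 f ↔
      ∀ z : D, Vp coeff i t 3 z - c * z ≠ d ∧ Vp coeff i t 3 z - z * c + δ c ≠ d := by
  subst hfdef
  rw [hR.irredDeg_three_iff hδ (hR.monicDeg_three c d)]
  exact forall_congr' fun z =>
    and_congr (hR.exists_eq_mul_t_sub_iff hδ c d z).not (hR.exists_eq_t_sub_mul_iff hδ c d z).not
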